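/- Let A be an n×n real SPSD matrix with SPSD square root A^{1/2}, let Q ∈ ℝ^{n×ℓ}, and let P be the orthogonal projection onto the column space of A^{1/2}Q. Then the Nyström approximation Â := A^{1/2} P A^{1/2} satisfies Qᵀ Â = Qᵀ A. -/

import Mathlib

open Matrix BigOperators

/-- `M = U * diagonal μ * Uᵀ` is a spectral (eigen)decomposition of the symmetric matrix `M`,
with orthogonal `U` and eigenvalues `μ` listed in nonincreasing order. -/
def IsSpectralDecomp {n : ℕ} (M U : Matrix (Fin n) (Fin n) ℝ) (μ : Fin n → ℝ) : Prop :=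
  Uᵀ * U = 1 ∧ Antitone μ ∧ M = U * Matrix.diagonal μ * Uᵀ

/-- Truncation of a spectral decomposition to its `k` largest (first `k`) eigenvalues:
the best rank-`k` approximation `M_(k)` associated with the decomposition `(U, μ)`. -/
noncomputable def trunc {n : ℕ} (k : ℕ) (U : Matrix (Fin n) (Fin n) ℝ) (μ : Fin n → ℝ) :
    Matrix (Fin n) (Fin n) ℝ :=
  U * Matrix.diagonal (fun i : Fin n => if (i : ℕ) < k then μ i else 0) * Uᵀ

/-- `f` is operator monotone on SPSD matrices: for all `m` and all `m × m` SPSD matrices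
`B ⪰ C ⪰ 0`, one has `f(B) ⪰ f(C)`, where matrix functions are computed through (any)
spectral decomposition. -/
def OperatorMonotone (f : ℝ → ℝ) : Prop :=
  ∀ (m : ℕ) (B C U V : Matrix (Fin m) (Fin m) ℝ) (β γ : Fin m → ℝ),
    IsSpectralDecomp B U β → IsSpectralDecomp C V γ →
    B.PosSemidef → C.PosSemidef → (B - C).PosSemidef →
    (U * Matrix.diagonal (f ∘ β) * Uᵀ - V * Matrix.diagonal (f ∘ γ) * Vᵀ).PosSemidef

/-- Squared Frobenius norm `‖M‖_F² = Σ_{i,j} M_{ij}²`. -/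
noncomputable def frobSq {m l : ℕ} (M : Matrix (Fin m) (Fin l) ℝ) : ℝ :=
  ∑ i, ∑ j, (M i j) ^ 2

/-- Frobenius norm. -/
noncomputable def frobNorm {m l : ℕ} (M : Matrix (Fin m) (Fin l) ℝ) : ℝ :=
  Real.sqrt (frobSq M)

/-- The eigenvalues of a Hermitian matrix listed in nonincreasing order:
`eigsDesc hM i` is the `(i+1)`-st largest eigenvalue of `M`. -/
noncomputable def eigsDesc {m : ℕ} {M : Matrix (Fin m) (Fin m) ℝ} (hM : M.IsHermitian) :
    Fin m → ℝ :=
  fun i => (hM.eigenvalues ∘ Tuple.sort hM.eigenvalues) i.rev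

/-- The singular values of `M` in nonincreasing order: `svDesc M i` is the `(i+1)`-st largest
singular value of `M`, i.e. the square root of the `(i+1)`-st largest eigenvalue of `MᴴM`. -/
noncomputable def svDesc {m l : ℕ} (M : Matrix (Fin m) (Fin l) ℝ) : Fin l → ℝ :=
  fun i => Real.sqrt (eigsDesc (by simpa using Matrix.isHermitian_conjTranspose_mul_self M : (Mᵀ * M).IsHermitian) i)

/-- Nuclear norm: the sum of the singular values. -/
noncomputable def nuclearNorm {m l : ℕ} (M : Matrix (Fin m) (Fin l) ℝ) : ℝ :=
  ∑ i, svDesc M i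

/-- Operator (spectral) norm: the largest singular value. -/
noncomputable def opNorm {m l : ℕ} (M : Matrix (Fin m) (Fin l) ℝ) : ℝ :=
  ⨆ i, svDesc M i

/-- `p`-th power of the Schatten `p`-norm: `‖M‖_(p)^p = Σᵢ σᵢ(M)^p`. -/
noncomputable def schattenPow {m l : ℕ} (p : ℝ) (M : Matrix (Fin m) (Fin l) ℝ) : ℝ :=
  ∑ i, svDesc M i ^ p

/-- Schatten `p`-norm: `‖M‖_(p) = (Σᵢ σᵢ(M)^p)^(1/p)`. -/
noncomputable def schattenNorm {m l : ℕ} (p : ℝ) (M : Matrix (Fin m) (Fin l) ℝ) : ℝ :=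
  (schattenPow p M) ^ (1 / p)

/-- The positive semidefinite square root (the definition `Matrix.PosSemidef.sqrt` of the older
Mathlib, since removed). -/
noncomputable def Matrix.PosSemidef.sqrt {n : ℕ} {A : Matrix (Fin n) (Fin n) ℝ}
    (hA : A.PosSemidef) : Matrix (Fin n) (Fin n) ℝ :=
  (hA.1.eigenvectorUnitary : Matrix (Fin n) (Fin n) ℝ) * diagonal (Real.sqrt ∘ hA.1.eigenvalues) *
    (star hA.1.eigenvectorUnitary : Matrix (Fin n) (Fin n) ℝ)

/-- `P` is the orthogonal projection onto the column space of `M`. -/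
def IsOrthProjOnto {m l : ℕ} (P : Matrix (Fin m) (Fin m) ℝ) (M : Matrix (Fin m) (Fin l) ℝ) :
    Prop :=
  Pᵀ = P ∧ P * P = P ∧ P * M = M ∧ ∃ Y : Matrix (Fin l) (Fin m) ℝ, P = M * Y

theorem Matrix.transpose_mul_eq_of_mul_eq {m l R : Type*} [Fintype m] [CommSemiring R]
    {P : Matrix m m R} {M : Matrix m l R} (hP : Pᵀ = P) (hPM : P * M = M) : Mᵀ * P = Mᵀ := by
  simpa only [transpose_mul, hP] using congrArg transpose hPM

namespace Matrix.PosSemidef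

variable {n : ℕ} {A : Matrix (Fin n) (Fin n) ℝ} (hA : A.PosSemidef)

theorem transpose_sqrt : hA.sqrtᵀ = hA.sqrt := by
  simp only [sqrt, transpose_mul, diagonal_transpose, star_eq_conjTranspose,
    conjTranspose_eq_transpose_of_trivial, transpose_transpose, Matrix.mul_assoc]

theorem sqrt_mul_self : hA.sqrt * hA.sqrt = A := by
  conv_rhs => rw [hA.1.spectral_theorem, Unitary.conjStarAlgAut_apply]
  simp only [sqrt, Matrix.mul_assoc, ← Matrix.mul_assoc (star _ : Matrix (Fin n) (Fin n) ℝ),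
    Unitary.coe_star_mul_self, Matrix.one_mul, ← Matrix.mul_assoc (diagonal _),
    diagonal_mul_diagonal]
  congr 3
  funext i
  simp [Real.mul_self_sqrt (hA.eigenvalues_nonneg i)]

end Matrix.PosSemidef

/-- The Nyström approximation `Â = A^{1/2} P A^{1/2}` of an SPSD matrix
`A` with respect to `Q` (with `P` the orthogonal projection onto the column space of
`A^{1/2}Q`) satisfies `QᵀÂ = QᵀA`. -/
theorem nystrom_interpolates
    (n l : ℕ) (A : Matrix (Fin n) (Fin n) ℝ) (hA : A.PosSemidef)
    (Q : Matrix (Fin n) (Fin l) ℝ) (P : Matrix (Fin n) (Fin n) ℝ)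
    (hP : IsOrthProjOnto P (hA.sqrt * Q)) :
    Qᵀ * (hA.sqrt * P * hA.sqrt) = Qᵀ * A := by
  obtain ⟨hPt, -, hPM, -⟩ := hP
  have hP_fixes_rows : (hA.sqrt * Q)ᵀ * P = (hA.sqrt * Q)ᵀ := transpose_mul_eq_of_mul_eq hPt hPM
  calc Qᵀ * (hA.sqrt * P * hA.sqrt) = (hA.sqrt * Q)ᵀ * P * hA.sqrt := by
        rw [transpose_mul, hA.transpose_sqrt]; simp only [Matrix.mul_assoc]
    _ = Qᵀ * A := by
        rw [hP_fixes_rows, transpose_mul, hA.transpose_sqrt, Matrix.mul_assoc, hA.sqrt_mul_self]
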